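/- arXiv:1612.07591 — 3 statements merged into one kernel-verified Lean document; each statement's English description precedes it below -/
import Mathlib

section
/- The series J(x) = Σ_{n≥0} (-x)^n q^{C(n,2)} / ((q;q)_n (xq;q)_n) satisfies the second-order linear q-difference equation (1-xq)·J(x) - (1 - x(1+q))·J(xq) + (x²q²/(1-xq²))·J(xq²) = 0. -/
/-! With `cₙ = (-1)ⁿ q^C(n,2) / (q;q)ₙ` and `Φ_{s,t}(x) = Σ cₙ q^{sn} xⁿ / (xqᵗ;q)ₙ` we have
`J(xqˢ) = Φ_{s,s+1}`. The partial fractions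
`1/(y;q)ₙ - qⁿ/(yq;q)ₙ = (1-qⁿ)/(y;q)ₙ₊₁` and `1/(y;q)ₙ - 1/(yq;q)ₙ = y(1-qⁿ)/(y;q)ₙ₊₁`,
applied termwise, together with `cₙ₊₁ (1-qⁿ⁺¹) = -qⁿ cₙ` give
`J(x) - J(xq) = -x Ψ`, `(1-xq)(1-xq²) Ψ = Φ_{1,3}` and `Φ_{1,2} - Φ_{1,3} = xq² (J(xq) - J(xq²))`
for `Ψ = Σ cₙ qⁿ xⁿ / (xq;q)ₙ₊₂`. Eliminating `Ψ` and `Φ_{1,3}` leaves the q-difference equation. -/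

open PowerSeries

noncomputable section
namespace FC

/-- The field `ℚ(q)` of rational functions in `q`. -/
abbrev K : Type := RatFunc ℚ

/-- The variable `q`. -/
def q : K := RatFunc.X

/-- The q-Pochhammer symbol `(a; q)_n = ∏_{i=0}^{n-1} (1 - a q^i)`. -/
def poch (a : K) (n : ℕ) : K := ∏ i ∈ Finset.range n, (1 - a * q ^ i)

/-- The power series `(x q^s; q)_n = ∏_{i=0}^{n-1} (1 - q^{s+i} x)` in the variable `x`. -/
def pochX (s n : ℕ) : PowerSeries K :=
  ∏ i ∈ Finset.range n, (1 - PowerSeries.C (q ^ (s + i)) * PowerSeries.X)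

/-- `J(x) = Σ_{n≥0} (-x)^n q^{C(n,2)} / ((q;q)_n (xq;q)_n)`, defined coefficientwise:
the coefficient of `x^N` is `Σ_{n=0}^{N} (-1)^n q^{C(n,2)}/(q;q)_n · [x^{N-n}] (xq;q)_n⁻¹`. -/
def J : PowerSeries K :=
  PowerSeries.mk fun N => ∑ n ∈ Finset.range (N + 1),
    ((-1 : K) ^ n * q ^ n.choose 2 / poch q n) * PowerSeries.coeff (N - n) (pochX 1 n)⁻¹

/-- `H(x) = Σ_{n≥0} (-x)^n q^{C(n,2)} / ((q;q)_n (x;q)_n)`. -/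
def H : PowerSeries K :=
  PowerSeries.mk fun N => ∑ n ∈ Finset.range (N + 1),
    ((-1 : K) ^ n * q ^ n.choose 2 / poch q n) * PowerSeries.coeff (N - n) (pochX 0 n)⁻¹

/-- `K(x) = Σ_{n≥0} (x^n q^{n(n+1)/2} / (xq;q)_n) · Σ_{k=0}^n (-1)^k/(q;q)_k`. -/
def Kq : PowerSeries K :=
  PowerSeries.mk fun N => ∑ n ∈ Finset.range (N + 1),
    (q ^ (n * (n + 1) / 2) * ∑ k ∈ Finset.range (n + 1), (-1 : K) ^ k / poch q k) *
      PowerSeries.coeff (N - n) (pochX 1 n)⁻¹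

section xSum

variable {R : Type*} [CommRing R]

/-- `xSum d F` is the power series `Σₙ d n • Xⁿ * F n`, defined coefficientwise. -/
def xSum (d : ℕ → R) (F : ℕ → R⟦X⟧) : R⟦X⟧ :=
  mk fun N => ∑ n ∈ Finset.range (N + 1), d n * coeff (N - n) (F n)

theorem coeff_xSum (d : ℕ → R) (F : ℕ → R⟦X⟧) (N : ℕ) :
    coeff N (xSum d F) = ∑ n ∈ Finset.range (N + 1), d n * coeff (N - n) (F n) :=
  coeff_mk _ _

theorem coeff_xSum_eq_coeff_sum (d : ℕ → R) (F : ℕ → R⟦X⟧) {N M : ℕ} (hNM : N < M) :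
    coeff N (xSum d F) = coeff N (∑ n ∈ Finset.range M, C (d n) * X ^ n * F n) := by
  have hterm (n : ℕ) : coeff N (C (d n) * X ^ n * F n)
      = if n ≤ N then d n * coeff (N - n) (F n) else 0 := by
    rw [mul_comm (C _), mul_assoc, coeff_X_pow_mul', coeff_C_mul]
  rw [coeff_xSum, map_sum, Finset.sum_congr rfl fun n _ => hterm n, Finset.sum_ite,
    Finset.sum_const_zero, add_zero]
  congr 1
  ext n
  simp only [Finset.mem_range, Finset.mem_filter]
  omega

theorem xSum_sub (d : ℕ → R) (F G : ℕ → R⟦X⟧) :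
    xSum d F - xSum d G = xSum d (fun n => F n - G n) := by
  ext N
  simp only [map_sub, coeff_xSum, ← Finset.sum_sub_distrib, mul_sub]

theorem xSum_neg (d : ℕ → R) (F : ℕ → R⟦X⟧) : xSum (fun n => -d n) F = -xSum d F := by
  ext N
  simp only [map_neg, coeff_xSum, ← Finset.sum_neg_distrib, neg_mul]

theorem xSum_mul_weight (d e : ℕ → R) (F : ℕ → R⟦X⟧) :
    xSum (fun n => d n * e n) F = xSum d (fun n => C (e n) * F n) := by
  ext N
  simp only [coeff_xSum, coeff_C_mul, mul_assoc]

theorem mul_xSum (g : R⟦X⟧) (d : ℕ → R) (F : ℕ → R⟦X⟧) :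
    g * xSum d F = xSum d (fun n => g * F n) := by
  ext N
  rw [coeff_mul, Finset.sum_congr rfl fun p hp => by
      rw [coeff_xSum_eq_coeff_sum d F (Finset.Nat.antidiagonal.snd_lt hp)],
    ← coeff_mul, coeff_xSum_eq_coeff_sum _ _ (Nat.lt_succ_self N), Finset.mul_sum]
  congr 1
  exact Finset.sum_congr rfl fun n _ => by ring

theorem xSum_eq_add_X_mul (d : ℕ → R) (F : ℕ → R⟦X⟧) :
    xSum d F = C (d 0) * F 0 + X * xSum (fun n => d (n + 1)) (fun n => F (n + 1)) := by
  ext N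
  rcases N with _ | N
  · simp [coeff_xSum]
  · rw [map_add, coeff_succ_X_mul, coeff_C_mul, coeff_xSum, coeff_xSum, Finset.sum_range_succ',
      add_comm]
    simp only [Nat.sub_zero, Nat.succ_sub_succ]

theorem rescale_xSum (a : R) (d : ℕ → R) (F : ℕ → R⟦X⟧) :
    rescale a (xSum d F) = xSum (fun n => d n * a ^ n) (fun n => rescale a (F n)) := by
  ext N
  rw [coeff_rescale, coeff_xSum, coeff_xSum, Finset.mul_sum]
  refine Finset.sum_congr rfl fun n hn => ?_
  rw [coeff_rescale, ← pow_mul_pow_sub a (Nat.le_of_lt_succ (Finset.mem_range.mp hn))]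
  ring

theorem rescale_one_sub_C_mul_X (a b : R) : rescale a (1 - C b * X) = 1 - C (a * b) * X := by
  ext m
  rw [coeff_rescale]
  rcases m with _ | _ | m <;> simp [coeff_one, coeff_X, mul_comm]

end xSum

theorem one_sub_q_pow_succ_ne_zero (k : ℕ) : (1 : K) - q ^ (k + 1) ≠ 0 := by
  have hpoly : (1 : Polynomial ℚ) - Polynomial.X ^ (k + 1) ≠ 0 := by
    rw [← neg_sub, neg_ne_zero, ← Polynomial.C_1]
    exact Polynomial.X_pow_sub_C_ne_zero k.succ_pos 1
  simpa [q] using RatFunc.algebraMap_ne_zero hpoly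

theorem poch_q_ne_zero (n : ℕ) : poch q n ≠ 0 :=
  Finset.prod_ne_zero_iff.mpr fun i _ => by
    rw [← pow_succ']
    exact one_sub_q_pow_succ_ne_zero i

def jCoeff (n : ℕ) : K := (-1 : K) ^ n * q ^ n.choose 2 / poch q n

theorem jCoeff_succ_mul (n : ℕ) : jCoeff (n + 1) * (1 - q ^ (n + 1)) = -(jCoeff n * q ^ n) := by
  have hpoch : poch q (n + 1) = poch q n * (1 - q ^ (n + 1)) := by
    rw [poch, Finset.prod_range_succ, ← pow_succ']
    rfl
  rw [jCoeff, jCoeff, hpoch, Nat.choose_succ_left _ _ (Nat.succ_pos 1), Nat.choose_one_right]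
  field_simp [poch_q_ne_zero n, one_sub_q_pow_succ_ne_zero n]
  ring

theorem constantCoeff_pochX (t n : ℕ) : constantCoeff (pochX t n) = 1 := by
  simp [pochX, map_prod]

theorem pochX_succ (t n : ℕ) : pochX t (n + 1) = pochX t n * (1 - C (q ^ (t + n)) * X) :=
  Finset.prod_range_succ _ _

theorem pochX_succ' (t n : ℕ) : pochX t (n + 1) = (1 - C (q ^ t) * X) * pochX (t + 1) n := by
  rw [pochX, Finset.prod_range_succ', add_zero, mul_comm]
  congr 1
  exact Finset.prod_congr rfl fun i _ => by rw [add_right_comm, add_assoc]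

def invPochX (t n : ℕ) : K⟦X⟧ := (pochX t n)⁻¹

theorem pochX_mul_invPochX (t n : ℕ) : pochX t n * invPochX t n = 1 :=
  PowerSeries.mul_inv_cancel _ (by rw [constantCoeff_pochX]; exact one_ne_zero)

theorem eq_invPochX_iff {t n : ℕ} {f : K⟦X⟧} : f = invPochX t n ↔ f * pochX t n = 1 :=
  PowerSeries.eq_inv_iff_mul_eq_one (by rw [constantCoeff_pochX]; exact one_ne_zero)

theorem eq_of_pochX_mul_eq {t n : ℕ} {f g : K⟦X⟧} (h : pochX t n * f = pochX t n * g) : f = g :=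
  mul_left_cancel₀ (fun h0 => by simpa [h0] using constantCoeff_pochX t n) h

theorem one_sub_mul_invPochX_succ (t n : ℕ) :
    (1 - C (q ^ t) * X) * invPochX t (n + 1) = invPochX (t + 1) n := by
  rw [eq_invPochX_iff, mul_right_comm, ← pochX_succ', pochX_mul_invPochX]

theorem pochX_succ_mul_invPochX (t n : ℕ) :
    pochX t (n + 1) * invPochX t n = 1 - C (q ^ (t + n)) * X := by
  rw [pochX_succ, mul_right_comm, pochX_mul_invPochX, one_mul]

theorem pochX_succ_mul_invPochX_succ (t n : ℕ) :
    pochX t (n + 1) * invPochX (t + 1) n = 1 - C (q ^ t) * X := by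
  rw [pochX_succ', mul_assoc, pochX_mul_invPochX, mul_one]

theorem invPochX_sub_C_mul_invPochX (t n : ℕ) :
    invPochX t n - C (q ^ n) * invPochX (t + 1) n = C (1 - q ^ n) * invPochX t (n + 1) := by
  refine eq_of_pochX_mul_eq (t := t) (n := n + 1) ?_
  rw [mul_sub, mul_left_comm _ (C _), mul_left_comm _ (C _), pochX_succ_mul_invPochX,
    pochX_succ_mul_invPochX_succ, pochX_mul_invPochX]
  simp only [map_sub, map_one, map_pow]
  ring

theorem invPochX_sub_invPochX (t n : ℕ) :
    invPochX t n - invPochX (t + 1) n = C (q ^ t * (1 - q ^ n)) * X * invPochX t (n + 1) := by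
  refine eq_of_pochX_mul_eq (t := t) (n := n + 1) ?_
  rw [mul_sub, mul_left_comm, pochX_succ_mul_invPochX, pochX_succ_mul_invPochX_succ,
    pochX_mul_invPochX]
  simp only [map_sub, map_one, map_pow, map_mul]
  ring

theorem rescale_pochX (s t n : ℕ) : rescale (q ^ s) (pochX t n) = pochX (s + t) n := by
  rw [pochX, pochX, map_prod]
  refine Finset.prod_congr rfl fun i _ => ?_
  rw [rescale_one_sub_C_mul_X, ← pow_add, add_assoc]

theorem rescale_invPochX (s t n : ℕ) : rescale (q ^ s) (invPochX t n) = invPochX (s + t) n := by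
  rw [eq_invPochX_iff, ← rescale_pochX, ← map_mul, mul_comm, pochX_mul_invPochX, map_one]

/-- `Φ_{s,t}` -/
def jSeries (s t : ℕ) : K⟦X⟧ := xSum (fun n => jCoeff n * q ^ (s * n)) (invPochX t)

/-- `Ψ` -/
def jTail : K⟦X⟧ := xSum (fun n => jCoeff n * q ^ n) (fun n => invPochX 1 (n + 2))

theorem J_eq_jSeries : J = jSeries 0 1 := by
  ext N
  simp [J, jSeries, coeff_xSum, jCoeff, invPochX]

theorem rescale_J (s : ℕ) : rescale (q ^ s) J = jSeries s (s + 1) := by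
  rw [J_eq_jSeries, jSeries, jSeries, rescale_xSum]
  congr
  · ext n
    rw [zero_mul, pow_zero, mul_one, ← pow_mul]
  · ext1 n
    exact rescale_invPochX s 1 n

theorem jSeries_zero_one_sub_jSeries_one_two : jSeries 0 1 - jSeries 1 2 = -(X * jTail) :=
  calc jSeries 0 1 - jSeries 1 2
      = xSum jCoeff (fun n => invPochX 1 n - C (q ^ n) * invPochX 2 n) := by
        rw [jSeries, jSeries, xSum_mul_weight jCoeff (fun n => q ^ (0 * n)),
          xSum_mul_weight jCoeff (fun n => q ^ (1 * n)), xSum_sub]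
        simp only [zero_mul, one_mul, pow_zero, map_one]
    _ = xSum jCoeff (fun n => C (1 - q ^ n) * invPochX 1 (n + 1)) := by
        congr
        ext1 n
        exact invPochX_sub_C_mul_invPochX 1 n
    _ = X * xSum (fun n => jCoeff (n + 1) * (1 - q ^ (n + 1))) (fun n => invPochX 1 (n + 2)) := by
        rw [← xSum_mul_weight, xSum_eq_add_X_mul]
        simp
    _ = -(X * jTail) := by
        simp_rw [jCoeff_succ_mul, xSum_neg, mul_neg, jTail]

theorem one_sub_mul_one_sub_mul_jTail :
    (1 - C q * X) * (1 - C (q ^ 2) * X) * jTail = jSeries 1 3 := by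
  rw [mul_comm (1 - C q * X), mul_assoc, jTail, mul_xSum, mul_xSum, jSeries]
  congr 1
  · simp only [one_mul]
  · ext1 n
    have h := one_sub_mul_invPochX_succ 1 (n + 1)
    rw [pow_one] at h
    rw [h]
    exact one_sub_mul_invPochX_succ 2 n

theorem jSeries_one_two_sub_jSeries_one_three :
    jSeries 1 2 - jSeries 1 3 = C (q ^ 2) * X * (jSeries 1 2 - jSeries 2 3) := by
  set w : ℕ → K := fun n => jCoeff n * q ^ (1 * n)
  have hleft : jSeries 1 2 - jSeries 1 3
      = xSum w (fun n => C (q ^ 2 * (1 - q ^ n)) * X * invPochX 2 (n + 1)) := by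
    rw [jSeries, jSeries, xSum_sub]
    congr
    ext1 n
    exact invPochX_sub_invPochX 2 n
  have hright : jSeries 1 2 - jSeries 2 3 = xSum w (fun n => C (1 - q ^ n) * invPochX 2 (n + 1)) := by
    have hw : (fun n => jCoeff n * q ^ (2 * n)) = fun n => w n * q ^ n := by
      ext n
      simp only [w]
      ring
    rw [jSeries, jSeries, hw, xSum_mul_weight w, xSum_sub]
    congr
    ext1 n
    exact invPochX_sub_C_mul_invPochX 2 n
  rw [hleft, hright, mul_xSum]
  congr
  ext1 n
  rw [map_mul]
  ring

/-- `(1-xq)·J(x) - (1-x(1+q))·J(xq) + (x²q²/(1-xq²))·J(xq²) = 0`. -/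
theorem stmt4 :
    (1 - PowerSeries.C q * PowerSeries.X) * J
      - (1 - PowerSeries.C (1 + q) * PowerSeries.X) * rescale q J
      + PowerSeries.X ^ 2 * PowerSeries.C (q ^ 2) *
          (1 - PowerSeries.C (q ^ 2) * PowerSeries.X)⁻¹ * rescale (q ^ 2) J = 0 := by
  have hA : (1 - C (q ^ 2) * X : K⟦X⟧) ≠ 0 := fun h0 => by simpa using congrArg constantCoeff h0
  have hAinv := PowerSeries.mul_inv_cancel (1 - C (q ^ 2) * X) (by simp)
  have hJq : rescale q J = jSeries 1 2 := by simpa using rescale_J 1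
  refine mul_left_cancel₀ hA ?_
  rw [mul_zero, hJq, rescale_J 2, J_eq_jSeries, map_add, map_one]
  linear_combination (1 - C (q ^ 2) * X) * (1 - C q * X) * jSeries_zero_one_sub_jSeries_one_two
    + X * jSeries_one_two_sub_jSeries_one_three - X * one_sub_mul_one_sub_mul_jTail
    + X ^ 2 * C (q ^ 2) * jSeries 2 3 * hAinv

end FC
end
end

section
/- Let J-cal(x) = Σ_{n≥0} (-1)^{⌈n/2⌉} x^n q^{n(n-1)/2} / (q²;q²)_{⌊n/2⌋}. Then (1-2xq)·J-cal(x) - (1-x(1+q))·J-cal(xq) + x²q²(1-2x)·J-cal(xq²) = 0. -/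
open PowerSeries

noncomputable section
namespace FC

/-- `(q²;q²)_m = ∏_{i=1}^{m} (1 - q^{2i})`. -/
def poch2 (m : ℕ) : K := ∏ i ∈ Finset.range m, (1 - q ^ (2 * (i + 1)))

/-- `𝒥(x) = Σ_{n≥0} (-1)^{⌈n/2⌉} x^n q^{C(n,2)} / (q²;q²)_{⌊n/2⌋}`. -/
def Jcal : PowerSeries K :=
  PowerSeries.mk fun n => (-1 : K) ^ ((n + 1) / 2) * q ^ n.choose 2 / poch2 (n / 2)

/-- `𝒦(x) = Σ_{n≥0} x^n q^{n(n+1)/2} Σ_{k=0}^{⌊n/2⌋} (-1)^k/(q²;q²)_k`. -/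
def Kcal : PowerSeries K :=
  PowerSeries.mk fun n =>
    q ^ (n * (n + 1) / 2) * ∑ k ∈ Finset.range (n / 2 + 1), (-1 : K) ^ k / poch2 k

end FC

/-! Write `a_n` for the coefficients of `𝒥` and `E` for its even part. Comparing consecutive
coefficients gives `a_{2m+1} = -q^{2m} a_{2m}` and `(1 - q^{2m+2}) a_{2m+2} = q^{2m+1} a_{2m+1}`.
The first says `𝒥(x) = E(x) - x E(xq)`, and together they give the second-order equation
`E(x) = E(xq) - q x² E(xq²)`. Substituting the first relation into the left-hand side of the
theorem leaves a combination of the second one and its rescaling by `q`. -/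

namespace PowerSeries

variable {R : Type*} [CommRing R]

def evenPart (f : R⟦X⟧) : R⟦X⟧ :=
  mk fun n => if Even n then coeff n f else 0

theorem coeff_evenPart_of_even {n : ℕ} (hn : Even n) (f : R⟦X⟧) :
    coeff n (evenPart f) = coeff n f := by
  simp [evenPart, hn]

theorem coeff_evenPart_of_odd {n : ℕ} (hn : Odd n) (f : R⟦X⟧) : coeff n (evenPart f) = 0 := by
  simp [evenPart, Nat.not_even_iff_odd.2 hn]

theorem rescale_C (a r : R) : rescale a (C r) = C r := by
  ext (_ | n) <;> simp [coeff_rescale, coeff_C]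

theorem qdiff_eq_zero_of_eq_sub_X_mul_rescale (q : R) {E J : R⟦X⟧}
    (hE : E = rescale q E - C q * X ^ 2 * rescale (q ^ 2) E) (hJ : J = E - X * rescale q E) :
    (1 - 2 * C q * X) * J - (1 - C (1 + q) * X) * rescale q J
      + X ^ 2 * C (q ^ 2) * (1 - 2 * X) * rescale (q ^ 2) J = 0 := by
  have hE' := congrArg (rescale q) hE
  have h2 : rescale q (rescale q E) = rescale (q ^ 2) E := by rw [rescale_rescale, sq]
  have h3 : rescale q (rescale (q ^ 2) E) = rescale (q ^ 3) E := by
    rw [rescale_rescale, ← pow_succ]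
  have h3' : rescale (q ^ 2) (rescale q E) = rescale (q ^ 3) E := by
    rw [rescale_rescale, ← pow_succ']
  simp only [map_sub, map_mul, map_pow, rescale_X, rescale_C, h2, h3] at hE'
  subst hJ
  simp only [map_sub, map_mul, map_pow, map_add, map_one, rescale_X, h2, h3']
  linear_combination (1 - 2 * C q * X) * hE - C q * X * (1 - 2 * X) * hE'

end PowerSeries

namespace FC

theorem one_sub_q_pow_ne_zero {m : ℕ} (hm : 0 < m) : (1 : K) - q ^ m ≠ 0 := by
  rw [← neg_ne_zero, neg_sub]
  simpa [q] using (map_ne_zero_iff _ (RatFunc.algebraMap_injective ℚ)).2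
    (Polynomial.X_pow_sub_C_ne_zero hm (1 : ℚ))

theorem coeff_Jcal_two_mul_add_one (m : ℕ) :
    coeff (2 * m + 1) Jcal = -q ^ (2 * m) * coeff (2 * m) Jcal := by
  simp only [Jcal, coeff_mk, show (2 * m + 1 + 1) / 2 = m + 1 by omega,
    show (2 * m + 1) / 2 = m by omega,
    Nat.mul_div_cancel_left m two_pos, Nat.choose_succ_succ', Nat.choose_one_right]
  ring

theorem one_sub_q_pow_mul_coeff_Jcal (m : ℕ) :
    (1 - q ^ (2 * m + 2)) * coeff (2 * m + 2) Jcal = q ^ (2 * m + 1) * coeff (2 * m + 1) Jcal := by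
  have hs := one_sub_q_pow_ne_zero (m := 2 * m + 2) (by omega)
  simp only [Jcal, coeff_mk, show (2 * m + 2 + 1) / 2 = m + 1 by omega,
    show (2 * m + 2) / 2 = m + 1 by omega,
    show (2 * m + 1) / 2 = m by omega, poch2, Finset.prod_range_succ,
    show 2 * m + 2 = (2 * m + 1) + 1 by omega, Nat.choose_succ_succ' (2 * m + 1),
    Nat.choose_one_right, show 2 * (m + 1) = 2 * m + 1 + 1 by omega]
  field_simp
  ring

theorem Jcal_eq_evenPart_sub : Jcal = evenPart Jcal - X * rescale q (evenPart Jcal) := by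
  ext (_ | n)
  · simp [evenPart]
  rw [map_sub, coeff_succ_X_mul, coeff_rescale]
  obtain ⟨m, rfl | rfl⟩ := Nat.even_or_odd' n
  · rw [coeff_evenPart_of_odd (odd_two_mul_add_one m), coeff_evenPart_of_even (even_two_mul m),
      coeff_Jcal_two_mul_add_one]
    ring
  · rw [coeff_evenPart_of_even ⟨m + 1, by ring⟩, coeff_evenPart_of_odd (odd_two_mul_add_one m)]
    ring

theorem evenPart_Jcal_eq :
    evenPart Jcal = rescale q (evenPart Jcal) - C q * X ^ 2 * rescale (q ^ 2) (evenPart Jcal) := by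
  ext n
  rw [mul_assoc, map_sub, coeff_C_mul, coeff_X_pow_mul', coeff_rescale, coeff_rescale]
  rcases n with _ | _ | n
  · simp
  · simp [coeff_evenPart_of_odd odd_one]
  rw [show n + 1 + 1 = n + 2 from rfl, if_pos (by omega), Nat.add_sub_cancel]
  obtain ⟨m, rfl | rfl⟩ := Nat.even_or_odd' n
  · rw [coeff_evenPart_of_even ⟨m + 1, by ring⟩, coeff_evenPart_of_even (even_two_mul m)]
    linear_combination one_sub_q_pow_mul_coeff_Jcal m
      + q ^ (2 * m + 1) * coeff_Jcal_two_mul_add_one m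
  · rw [coeff_evenPart_of_odd ⟨m + 1, by ring⟩, coeff_evenPart_of_odd (odd_two_mul_add_one m)]
    ring

/-- `(1-2xq)·𝒥(x) - (1-x(1+q))·𝒥(xq) + x²q²(1-2x)·𝒥(xq²) = 0`. -/
theorem stmt7 :
    (1 - 2 * PowerSeries.C (R := K) q * PowerSeries.X) * Jcal
      - (1 - PowerSeries.C (R := K) (1 + q) * PowerSeries.X) * rescale q Jcal
      + PowerSeries.X ^ 2 * PowerSeries.C (R := K) (q ^ 2) * (1 - 2 * PowerSeries.X) *
          rescale (q ^ 2) Jcal = 0 :=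
  qdiff_eq_zero_of_eq_sub_X_mul_rescale q evenPart_Jcal_eq Jcal_eq_evenPart_sub

end FC
end
end

section
/- With K-cal(x) = Σ_{n≥0} x^n q^{n(n+1)/2} Σ_{k=0}^{⌊n/2⌋} (-1)^k/(q²;q²)_k and J-cal(x) = Σ_{n≥0} (-1)^{⌈n/2⌉} x^n q^{n(n-1)/2} / (q²;q²)_{⌊n/2⌋}, one has J-cal(x) = (1-x)·K-cal(x) - qx·K-cal(xq) + x³q³·K-cal(xq²). -/
open PowerSeries

noncomputable section
namespace FC

/-! Compare coefficients of `x^N`. Writing `Sₘ = Σ_{k ≤ m} (-1)^k/(q²;q²)_k` (`innerSum m`), the coefficient of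
`𝒦` is `q^{C(N+1,2)} S_{⌊N/2⌋}`, and for `N ≥ 3` all terms of the identity carry the common factor
`q^{C(N,2)}`. What remains is a three-term relation between `S_{⌊N/2⌋}`, `S_{⌊(N-1)/2⌋}` and
`S_{⌊(N-3)/2⌋}`, which collapses because consecutive partial sums differ by a single term. -/

lemma q_pow_ne_one {k : ℕ} (hk : k ≠ 0) : q ^ k ≠ 1 := by
  intro h
  have : (Polynomial.X : Polynomial ℚ) ^ k = 1 := by
    apply RatFunc.algebraMap_injective ℚ
    simpa [q, RatFunc.algebraMap_X] using h
  have := congrArg Polynomial.natDegree this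
  simp only [Polynomial.natDegree_X_pow, Polynomial.natDegree_one] at this
  exact hk this

lemma one_sub_q_pow_ne_zero_s12 {k : ℕ} (hk : k ≠ 0) : 1 - q ^ k ≠ 0 :=
  sub_ne_zero.2 (q_pow_ne_one hk).symm

lemma poch2_succ (m : ℕ) : poch2 (m + 1) = poch2 m * (1 - q ^ (2 * (m + 1))) :=
  Finset.prod_range_succ _ _

lemma poch2_ne_zero (m : ℕ) : poch2 m ≠ 0 :=
  Finset.prod_ne_zero_iff.2 fun _ _ => one_sub_q_pow_ne_zero_s12 (by omega)

def innerSum (m : ℕ) : K := ∑ k ∈ Finset.range (m + 1), (-1 : K) ^ k / poch2 k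

lemma innerSum_succ (m : ℕ) :
    innerSum (m + 1) = innerSum m + (-1 : K) ^ (m + 1) / poch2 (m + 1) :=
  Finset.sum_range_succ _ _

lemma innerSum_recurrence (n : ℕ) :
    q ^ (n + 3) * innerSum ((n + 3) / 2) - (1 + q ^ (n + 3)) * innerSum ((n + 2) / 2)
      + innerSum (n / 2) = (-1 : K) ^ ((n + 4) / 2) / poch2 ((n + 3) / 2) := by
  obtain ⟨m, rfl | rfl⟩ := Nat.even_or_odd' n
  · rw [show (2 * m + 3) / 2 = m + 1 by omega, show (2 * m + 2) / 2 = m + 1 by omega,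
      show 2 * m / 2 = m by omega, show (2 * m + 4) / 2 = m + 2 by omega, innerSum_succ]
    ring
  · rw [show (2 * m + 1 + 3) / 2 = m + 2 by omega, show (2 * m + 1 + 2) / 2 = m + 1 by omega,
      show (2 * m + 1) / 2 = m by omega, show (2 * m + 1 + 4) / 2 = m + 2 by omega,
      innerSum_succ (m + 1), innerSum_succ m, poch2_succ (m + 1)]
    field_simp [poch2_ne_zero, one_sub_q_pow_ne_zero_s12]
    ring

lemma choose_two_succ (n : ℕ) : (n + 1).choose 2 = n.choose 2 + n := by
  simp [Nat.choose_succ_succ', add_comm]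

lemma coeff_Kcal (n : ℕ) : coeff n Kcal = q ^ (n + 1).choose 2 * innerSum (n / 2) := by
  rw [Kcal, coeff_mk, Nat.choose_two_right, Nat.add_sub_cancel, mul_comm n, innerSum]

theorem coeff_add_three_rescale_combination {R : Type*} [CommRing R] (a : R)
    (f : PowerSeries R) (n : ℕ) :
    coeff (n + 3) ((1 - X) * f - C a * X * rescale a f + X ^ 3 * C (a ^ 3) * rescale (a ^ 2) f)
      = coeff (n + 3) f - (1 + a ^ (n + 3)) * coeff (n + 2) f + a ^ (2 * n + 3) * coeff n f := by
  simp only [sub_mul, one_mul, mul_assoc, map_add, map_sub, coeff_C_mul, coeff_succ_X_mul,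
    coeff_X_pow_mul, coeff_rescale]
  ring

/-- `𝒥(x) = (1-x)·𝒦(x) - qx·𝒦(xq) + x³q³·𝒦(xq²)`. -/
theorem stmt12 :
    Jcal = (1 - PowerSeries.X) * Kcal
      - PowerSeries.C q * PowerSeries.X * rescale q Kcal
      + PowerSeries.X ^ 3 * PowerSeries.C (q ^ 3) * rescale (q ^ 2) Kcal := by
  ext N
  obtain _ | _ | _ | n := N
  · simp [Jcal, Kcal, poch2]
  · simp [sub_mul, mul_assoc, coeff_X_pow_mul', Jcal, Kcal, poch2]
  · simp [sub_mul, mul_assoc, coeff_X_pow_mul', Jcal, Kcal, poch2, Finset.sum_range_succ]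
    field_simp [one_sub_q_pow_ne_zero_s12 two_ne_zero]
    ring
  have hchoose : (n + 3).choose 2 = (n + 1).choose 2 + (2 * n + 3) := by
    rw [choose_two_succ, choose_two_succ]; omega
  rw [show n + 1 + 1 + 1 = n + 3 from rfl, coeff_add_three_rescale_combination,
    coeff_Kcal, coeff_Kcal, coeff_Kcal, Jcal, coeff_mk, choose_two_succ (n + 3), hchoose]
  linear_combination -q ^ ((n + 1).choose 2 + (2 * n + 3)) * innerSum_recurrence n

end FC
end
end
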